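/- arXiv:2409.05182 — 2 statements merged into one kernel-verified Lean document; each statement's English description precedes it below -/
import Mathlib

section
/- Let 𝔏 be a topological left Leibniz algebra whose closed ideal of squares gives the Hausdorff Lie algebra quotient 𝔏_Lie = 𝔏/cl(𝔏^sq), with projection π. Then the pullback map π* : Hⁿ(𝔏_Lie, ℝ) → HLⁿ(𝔏, ℝ) from continuous Chevalley–Eilenberg cohomology to continuous Leibniz (Loday) cohomology with trivial coefficients is injective for n = 1 and n = 2. -/
noncomputable section

namespace Paper

/-- The ideal of squares (Leibniz kernel) of a Leibniz algebra with bracket `b`: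
the smallest left ideal containing all squares `[x,x]`. -/
def leibnizSquareIdeal {L : Type*} [AddCommGroup L] [Module ℝ L]
    (b : L →ₗ[ℝ] L →ₗ[ℝ] L) : Submodule ℝ L :=
  sInf {I : Submodule ℝ L | (∀ x, b x x ∈ I) ∧ ∀ x y, y ∈ I → b x y ∈ I}

/-- Let `𝔏 = L` be a topological left Leibniz algebra (a Hausdorff topological vector space
with a continuous bilinear bracket `b` satisfying the left Leibniz identity), and let
`𝔏_Lie = L ⧸ S` be its maximal Hausdorff Lie algebra quotient, where `S` is the closure of
the ideal of squares, with projection `π = S.mkQ`.  Then the pullback map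
`π* : Hⁿ(𝔏_Lie, ℝ) → HLⁿ(𝔏, ℝ)` from continuous Chevalley–Eilenberg cohomology to
continuous Leibniz (Loday) cohomology with trivial coefficients is injective for `n = 1`
(where it says: two continuous functionals on the quotient with equal pullbacks agree) and
for `n = 2` (where it says: a continuous alternating 2-cocycle on the quotient whose
pullback is a Leibniz coboundary is itself a coboundary; note that cochains and the
cocycle/coboundary conditions on the quotient are expressed via the surjection `π`). -/
theorem statement_10 {L : Type*} [AddCommGroup L] [Module ℝ L] [TopologicalSpace L]
    [IsTopologicalAddGroup L] [ContinuousSMul ℝ L] [T2Space L]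
    (b : L →ₗ[ℝ] L →ₗ[ℝ] L)
    (hbcont : Continuous fun p : L × L => b p.1 p.2)
    (hleib : ∀ x y z, b x (b y z) = b (b x y) z + b y (b x z)) :
    -- injectivity of π* in degree 1
    (∀ f g : (L ⧸ (leibnizSquareIdeal b).topologicalClosure) →ₗ[ℝ] ℝ,
        Continuous f → Continuous g →
        (∀ x : L, f ((leibnizSquareIdeal b).topologicalClosure.mkQ x)
          = g ((leibnizSquareIdeal b).topologicalClosure.mkQ x)) → f = g) ∧
    -- injectivity of π* in degree 2
    (∀ ψ : (L ⧸ (leibnizSquareIdeal b).topologicalClosure) →ₗ[ℝ]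
            (L ⧸ (leibnizSquareIdeal b).topologicalClosure) →ₗ[ℝ] ℝ,
        Continuous (fun p : (L ⧸ (leibnizSquareIdeal b).topologicalClosure) ×
            (L ⧸ (leibnizSquareIdeal b).topologicalClosure) => ψ p.1 p.2) →
        (∀ u, ψ u u = 0) →
        (∀ x y z : L,
          ψ ((leibnizSquareIdeal b).topologicalClosure.mkQ (b x y))
              ((leibnizSquareIdeal b).topologicalClosure.mkQ z)
            + ψ ((leibnizSquareIdeal b).topologicalClosure.mkQ (b y z))
              ((leibnizSquareIdeal b).topologicalClosure.mkQ x)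
            + ψ ((leibnizSquareIdeal b).topologicalClosure.mkQ (b z x))
              ((leibnizSquareIdeal b).topologicalClosure.mkQ y) = 0) →
        (∃ c : L →ₗ[ℝ] ℝ, Continuous c ∧
          ∀ x y : L, ψ ((leibnizSquareIdeal b).topologicalClosure.mkQ x)
            ((leibnizSquareIdeal b).topologicalClosure.mkQ y) = -c (b x y)) →
        ∃ cq : (L ⧸ (leibnizSquareIdeal b).topologicalClosure) →ₗ[ℝ] ℝ,
          Continuous cq ∧
          ∀ x y : L, ψ ((leibnizSquareIdeal b).topologicalClosure.mkQ x)
              ((leibnizSquareIdeal b).topologicalClosure.mkQ y)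
            = -cq ((leibnizSquareIdeal b).topologicalClosure.mkQ (b x y))) := by
  classical
  set I := leibnizSquareIdeal b with hI
  set S := I.topologicalClosure with hS
  constructor
  · intro f g _ _ h
    ext x
    exact h x
  · intro ψ _ halt _ ⟨c, hc, hcb⟩
    -- b x x ∈ I
    have hsq : ∀ x, b x x ∈ I := fun x =>
      Submodule.mem_sInf.2 (fun J hJ => hJ.1 x)
    have hideal : ∀ x y, y ∈ I → b x y ∈ I := fun x y hy =>
      Submodule.mem_sInf.2 (fun J hJ => hJ.2 x y (Submodule.mem_sInf.1 hy J hJ))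
    have hIS : I ≤ S := Submodule.le_topologicalClosure I
    -- S is a left ideal
    have hbx : ∀ x : L, Continuous fun y => b x y := by
      intro x
      exact hbcont.comp (Continuous.prodMk_right x)
    have hSideal : ∀ x y, y ∈ S → b x y ∈ S := by
      intro x y hy
      have h1 : (fun z => b x z) '' (I : Set L) ⊆ (S : Set L) :=
        Set.image_subset_iff.2 (fun z hz => hIS (hideal x z hz))
      have h2 : closure ((fun z => b x z) '' (I : Set L)) ⊆ (S : Set L) :=
        closure_minimal h1 I.isClosed_topologicalClosure
      have h3 : (fun z => b x z) '' closure (I : Set L)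
          ⊆ closure ((fun z => b x z) '' (I : Set L)) :=
        (hbx x).continuousOn.image_closure
      exact h2 (h3 ⟨y, hy, rfl⟩)
    -- c vanishes on squares and on b x y for y ∈ S
    have hcsq : ∀ x, c (b x x) = 0 := by
      intro x
      have := hcb x x
      rw [halt] at this
      linarith
    have hcS : ∀ x y, y ∈ S → c (b x y) = 0 := by
      intro x y hy
      have hπy : S.mkQ y = 0 := (Submodule.Quotient.mk_eq_zero S).2 hy
      have := hcb x y
      rw [hπy] at this
      simp at this
      linarith
    -- I ≤ ker c ⊓ S, hence S ≤ ker c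
    have hIker : I ≤ LinearMap.ker c ⊓ S := by
      refine sInf_le ?_
      constructor
      · intro x
        exact ⟨hcsq x, hIS (hsq x)⟩
      · rintro x y ⟨hy1, hy2⟩
        exact ⟨hcS x y hy2, hSideal x y hy2⟩
    have hker_closed : IsClosed ((LinearMap.ker c : Submodule ℝ L) : Set L) := by
      have : ((LinearMap.ker c : Submodule ℝ L) : Set L) = c ⁻¹' {0} := by
        ext z; simp [LinearMap.mem_ker]
      rw [this]
      exact isClosed_singleton.preimage hc
    have hSker : S ≤ LinearMap.ker c :=
      Submodule.topologicalClosure_minimal I (hIker.trans inf_le_left) hker_closed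
    refine ⟨S.liftQ c hSker, ?_, ?_⟩
    · exact (S.isOpenQuotientMap_mkQ.continuous_comp_iff).1 hc
    · intro x y
      have : S.liftQ c hSker (S.mkQ (b x y)) = c (b x y) := rfl
      rw [this]
      exact hcb x y

end Paper
end
end

section
/- Let q̂ : 𝔤̂ → 𝔤 be a central extension of complete locally convex topological Lie algebras such that 𝔤̂ is perfect and H²(𝔤̂, 𝔷′) = 0 for a given locally convex vector space 𝔷′. Then for every linearly split central extension 𝔷′ → 𝔤′ → 𝔤 there is a unique morphism of central extensions from 𝔤̂ to 𝔤′, i.e. a unique continuous Lie algebra morphism f : 𝔤̂ → 𝔤′ with q′∘f = q̂; in other words, the extension 𝔤̂ → 𝔤 is universal for central extensions of 𝔤 by 𝔷′. -/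
noncomputable section

namespace Paper

universe u v w x

/-- The cyclic form of the Jacobi identity for left-nested brackets. -/
lemma jac3 {L : Type*} [LieRing L] (a b c : L) :
    ⁅⁅a, b⁆, c⁆ + ⁅⁅b, c⁆, a⁆ + ⁅⁅c, a⁆, b⁆ = 0 := by
  have h := lie_jacobi c a b
  have e1 : ⁅⁅a, b⁆, c⁆ = -⁅c, ⁅a, b⁆⁆ := (lie_skew _ _).symm
  have e2 : ⁅⁅b, c⁆, a⁆ = -⁅a, ⁅b, c⁆⁆ := (lie_skew _ _).symm
  have e3 : ⁅⁅c, a⁆, b⁆ = -⁅b, ⁅c, a⁆⁆ := (lie_skew _ _).symm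
  rw [e1, e2, e3,
    show (-⁅c, ⁅a, b⁆⁆ + -⁅a, ⁅b, c⁆⁆ + -⁅b, ⁅c, a⁆⁆ : L)
      = -(⁅c, ⁅a, b⁆⁆ + ⁅a, ⁅b, c⁆⁆ + ⁅b, ⁅c, a⁆⁆) from by abel, h, neg_zero]

/-- Let `q̂ : 𝔤̂ → 𝔤` be a central extension of complete locally convex topological Lie
algebras such that `𝔤̂` is perfect (spanned by brackets) and `H²(𝔤̂, 𝔷′) = 0` for a given
locally convex space `𝔷′` (every jointly continuous alternating 2-cocycle on `𝔤̂` with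
values in the trivial module `𝔷′` is a coboundary `ω(x,y) = η(⁅x,y⁆)`).  Then for every
linearly split central extension `𝔷′ → 𝔤′ → 𝔤` (given by a continuous embedding
`i : 𝔷′ → 𝔤′` with continuous retraction `p`, whose image is the — central — kernel of the
continuous surjection `q′ : 𝔤′ → 𝔤`, together with a continuous linear section `s` of
`q′`) there is a unique morphism of central extensions from `𝔤̂` to `𝔤′`, i.e. a unique
continuous Lie algebra morphism `f : 𝔤̂ → 𝔤′` with `q′ ∘ f = q̂`. -/
theorem statement_16
    -- 𝔤̂ : complete locally convex topological Lie algebra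
    {ghat : Type u} [LieRing ghat] [LieAlgebra ℝ ghat]
    [UniformSpace ghat] [IsUniformAddGroup ghat] [ContinuousSMul ℝ ghat]
    [CompleteSpace ghat] [LocallyConvexSpace ℝ ghat]
    (hbrhat : Continuous fun p : ghat × ghat => ⁅p.1, p.2⁆)
    -- 𝔤 : complete locally convex topological Lie algebra
    {g : Type v} [LieRing g] [LieAlgebra ℝ g]
    [UniformSpace g] [IsUniformAddGroup g] [ContinuousSMul ℝ g]
    [CompleteSpace g] [LocallyConvexSpace ℝ g]
    (hbr : Continuous fun p : g × g => ⁅p.1, p.2⁆)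
    -- q̂ : 𝔤̂ → 𝔤 is a central extension
    (qhat : ghat →ₗ⁅ℝ⁆ g) (hqhat_cont : Continuous qhat)
    (hqhat_surj : Function.Surjective qhat)
    (hqhat_central : ∀ z : ghat, qhat z = 0 → ∀ y : ghat, ⁅z, y⁆ = 0)
    -- 𝔤̂ is perfect
    (hperf : ∀ v : ghat, v ∈ Submodule.span ℝ {y : ghat | ∃ a b : ghat, y = ⁅a, b⁆})
    -- 𝔷′ : a locally convex space
    {z' : Type w} [AddCommGroup z'] [Module ℝ z'] [TopologicalSpace z']
    [IsTopologicalAddGroup z'] [ContinuousSMul ℝ z'] [LocallyConvexSpace ℝ z']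
    -- H²(𝔤̂, 𝔷′) = 0
    (hH2 : ∀ ω : ghat →ₗ[ℝ] ghat →ₗ[ℝ] z',
      Continuous (fun p : ghat × ghat => ω p.1 p.2) →
      (∀ a, ω a a = 0) →
      (∀ a b c, ω ⁅a, b⁆ c + ω ⁅b, c⁆ a + ω ⁅c, a⁆ b = 0) →
      ∃ η : ghat →ₗ[ℝ] z', Continuous η ∧ ∀ a c, ω a c = η ⁅a, c⁆) :
    -- universality: for every linearly split central extension 𝔷′ → 𝔤′ → 𝔤 ...
    ∀ (g' : Type x) (_ : LieRing g') (_ : LieAlgebra ℝ g')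
      (_ : TopologicalSpace g') (_ : IsTopologicalAddGroup g') (_ : ContinuousSMul ℝ g'),
      (Continuous fun p : g' × g' => ⁅p.1, p.2⁆) →
      ∀ (q' : g' →ₗ⁅ℝ⁆ g), Continuous q' → Function.Surjective q' →
      (∀ z : g', q' z = 0 → ∀ y : g', ⁅z, y⁆ = 0) →
      ∀ (i : z' →ₗ[ℝ] g'), Continuous i → (∀ c, q' (i c) = 0) →
      (∀ z : g', q' z = 0 → ∃ c, i c = z) →
      ∀ (p : g' →ₗ[ℝ] z'), Continuous p → (∀ c, p (i c) = c) →
      ∀ (s : g →ₗ[ℝ] g'), Continuous s → (∀ y, q' (s y) = y) →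
      -- ... there is a unique morphism of central extensions 𝔤̂ → 𝔤′
      ∃! f : ghat →ₗ⁅ℝ⁆ g', Continuous f ∧ ∀ v, q' (f v) = qhat v := by
  intro g' _ _ _ _ _ hbr' q' hq'_cont hq'_surj hq'_central i hi_cont hiq hker p hp_cont hpi s hs_cont hqs
  classical
  set σ : ghat →ₗ[ℝ] g' := s ∘ₗ qhat.toLinearMap with hσdef
  have hσ_cont : Continuous σ := hs_cont.comp hqhat_cont
  have hq'σ : ∀ x, q' (σ x) = qhat x := fun x => hqs _
  have hβker : ∀ x y : ghat, q' (⁅σ x, σ y⁆ - σ ⁅x, y⁆) = 0 := by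
    intro x y
    have h1 : q' ⁅σ x, σ y⁆ = ⁅q' (σ x), q' (σ y)⁆ := q'.map_lie _ _
    have h2 : qhat ⁅x, y⁆ = ⁅qhat x, qhat y⁆ := qhat.map_lie _ _
    rw [map_sub, h1, hq'σ, hq'σ, hq'σ, h2, sub_self]
  have hiβ : ∀ x y : ghat, i (p (⁅σ x, σ y⁆ - σ ⁅x, y⁆)) = ⁅σ x, σ y⁆ - σ ⁅x, y⁆ := by
    intro x y
    obtain ⟨c, hc⟩ := hker _ (hβker x y)
    rw [← hc, hpi]
  have hcentral : ∀ (c : z') (y : g'), ⁅i c, y⁆ = 0 := fun c y => hq'_central _ (hiq c) y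
  have hcentral' : ∀ (c : z') (y : g'), ⁅y, i c⁆ = 0 := by
    intro c y; rw [← lie_skew, hcentral, neg_zero]
  set ω : ghat →ₗ[ℝ] ghat →ₗ[ℝ] z' :=
    LinearMap.mk₂ ℝ (fun x y => p (⁅σ x, σ y⁆ - σ ⁅x, y⁆))
      (by intro a b c
          simp only [map_add, add_lie, map_sub]
          abel)
      (by intro r a c
          simp only [map_smul, smul_lie, map_sub, smul_sub])
      (by intro a b c
          simp only [map_add, lie_add, map_sub]
          abel)
      (by intro r a c
          simp only [map_smul, lie_smul, map_sub, smul_sub]) with hωdef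
  have hωapp : ∀ x y, ω x y = p (⁅σ x, σ y⁆ - σ ⁅x, y⁆) := fun x y => rfl
  have hω_cont : Continuous fun pr : ghat × ghat => ω pr.1 pr.2 := by
    simp only [hωapp]
    exact hp_cont.comp (((hbr'.comp ((hσ_cont.comp continuous_fst).prodMk
      (hσ_cont.comp continuous_snd)))).sub (hσ_cont.comp hbrhat))
  have hω_alt : ∀ a, ω a a = 0 := by
    intro a; rw [hωapp]; simp
  have hinj : Function.Injective i := Function.LeftInverse.injective hpi
  have key : ∀ a b c : ghat, ⁅σ ⁅a, b⁆, σ c⁆ = ⁅⁅σ a, σ b⁆, σ c⁆ := by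
    intro a b c
    have h : σ ⁅a, b⁆ = ⁅σ a, σ b⁆ - i (p (⁅σ a, σ b⁆ - σ ⁅a, b⁆)) := by
      rw [hiβ a b]; abel
    rw [h, sub_lie, hcentral, sub_zero]
  have hω_cocycle : ∀ a b c, ω ⁅a, b⁆ c + ω ⁅b, c⁆ a + ω ⁅c, a⁆ b = 0 := by
    intro a b c
    apply hinj
    rw [map_add, map_add, map_zero, hωapp, hωapp, hωapp, hiβ, hiβ, hiβ]
    have hjac : ⁅⁅a, b⁆, c⁆ + ⁅⁅b, c⁆, a⁆ + ⁅⁅c, a⁆, b⁆ = (0 : ghat) :=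
      jac3 a b c
    have hjac' : ⁅⁅σ a, σ b⁆, σ c⁆ + ⁅⁅σ b, σ c⁆, σ a⁆ + ⁅⁅σ c, σ a⁆, σ b⁆ = (0 : g') :=
      jac3 (σ a) (σ b) (σ c)
    calc (⁅σ ⁅a, b⁆, σ c⁆ - σ ⁅⁅a, b⁆, c⁆) + (⁅σ ⁅b, c⁆, σ a⁆ - σ ⁅⁅b, c⁆, a⁆)
          + (⁅σ ⁅c, a⁆, σ b⁆ - σ ⁅⁅c, a⁆, b⁆)
        = (⁅⁅σ a, σ b⁆, σ c⁆ + ⁅⁅σ b, σ c⁆, σ a⁆ + ⁅⁅σ c, σ a⁆, σ b⁆)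
          - σ (⁅⁅a, b⁆, c⁆ + ⁅⁅b, c⁆, a⁆ + ⁅⁅c, a⁆, b⁆) := by
          rw [key a b c, key b c a, key c a b, map_add, map_add]; abel
      _ = 0 := by rw [hjac, hjac', map_zero, sub_zero]
  obtain ⟨η, hη_cont, hηω⟩ := hH2 ω hω_cont hω_alt hω_cocycle
  set F : ghat →ₗ[ℝ] g' := σ + i ∘ₗ η with hFdef
  have hFapp : ∀ v, F v = σ v + i (η v) := fun v => rfl
  have hbrF : ∀ x y : ghat, ⁅F x, F y⁆ = ⁅σ x, σ y⁆ := by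
    intro x y
    rw [hFapp, hFapp, add_lie, lie_add, lie_add, hcentral, hcentral', hcentral']
    abel
  have hFlie : ∀ x y : ghat, F ⁅x, y⁆ = ⁅F x, F y⁆ := by
    intro x y
    rw [hbrF, hFapp, ← hηω, hωapp, hiβ]
    abel
  refine ⟨⟨F, ?_⟩, ⟨?_, ?_⟩, ?_⟩
  · intro x y
    exact hFlie x y
  · exact (hσ_cont.add (hi_cont.comp hη_cont) : Continuous fun v => σ v + i (η v))
  · intro v
    show q' (F v) = qhat v
    rw [hFapp, map_add, hq'σ, hiq, add_zero]
  · rintro f' ⟨hf'_cont, hf'_comm⟩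
    have hdz : ∀ x y : ghat, (f'.toLinearMap - F) ⁅x, y⁆ = 0 := by
      intro x y
      have h1 : q' (f' x - F x) = 0 := by
        rw [map_sub, hf'_comm]
        show qhat x - q' (F x) = 0
        rw [hFapp, map_add, hq'σ, hiq, add_zero, sub_self]
      have h2 : q' (f' y - F y) = 0 := by
        rw [map_sub, hf'_comm]
        show qhat y - q' (F y) = 0
        rw [hFapp, map_add, hq'σ, hiq, add_zero, sub_self]
      have e1 : f' ⁅x, y⁆ = ⁅f' x, f' y⁆ := f'.map_lie _ _
      have e2 : F ⁅x, y⁆ = ⁅F x, F y⁆ := hFlie x y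
      have expand : ⁅f' x, f' y⁆ - ⁅F x, F y⁆
          = ⁅f' x - F x, f' y⁆ + ⁅F x, f' y - F y⁆ := by
        rw [sub_lie, lie_sub]; abel
      have c2 : ⁅F x, f' y - F y⁆ = 0 := by
        rw [← lie_skew, hq'_central _ h2, neg_zero]
      show f' ⁅x, y⁆ - F ⁅x, y⁆ = 0
      rw [e1, e2, expand, hq'_central _ h1, c2, add_zero]
    have hd0 : ∀ v, (f'.toLinearMap - F) v = 0 := by
      intro v
      have hsub : Submodule.span ℝ {y : ghat | ∃ a b : ghat, y = ⁅a, b⁆}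
          ≤ LinearMap.ker (f'.toLinearMap - F) := by
        rw [Submodule.span_le]
        rintro w ⟨a, b, rfl⟩
        exact hdz a b
      exact hsub (hperf v)
    apply LieHom.ext
    intro v
    have := hd0 v
    rw [LinearMap.sub_apply, sub_eq_zero] at this
    exact this

end Paper
end
end
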